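/- Let G* be a colored 𝔯-partite graph on Ω, let h ≥ 1, and let δ be a function assigning a value in [0,∞) to each total color of G*, such that δ(c⃗) = 0 for every c⃗ ∈ TC₁(G*) and δ(c⃗) = 1 for every bad c⃗ ∈ TC₂(G*). Suppose that the counting equation P_{φ∈Φ(h)}[G*(φ(e)) = S(e) for all e ∈ 𝕍(S)] = ∏_{v∈𝕍₁(S)} d_{G*}(S⟨v⟩) · ∏_{e∈𝕍₂(S)} ( d_{G*}(S⟨e⟩) ±̇ δ(S⟨e⟩) ) holds for every S ∈ S_{h,G*} such that no e ∈ 𝕍(S) has bad total-color S⟨e⟩. Then the counting equation holds for every S ∈ S_{h,G*}. -/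

import Mathlib

open Finset
open scoped BigOperators Classical

/-! ## Framework: colored partite graphs, complexes, partitionwise maps,
regularization, relative densities and regularity (Ishigami's setting). -/

/-- Partitionwise maps `Φ(h)`: `h` sample vertices in each of the `r` parts. -/
abbrev PMap {r : ℕ} (Ω : Fin r → Type) (h : ℕ) : Type := ∀ i : Fin r, Fin h → Ω i

/-- The product weight of a partitionwise map (each sample independent). -/
noncomputable def pmapWeight {r : ℕ} (Ω : Fin r → Type) [∀ i, Fintype (Ω i)]
    (w : ∀ i, Ω i → ℝ) {h : ℕ} (φ : PMap Ω h) : ℝ :=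
  ∏ i : Fin r, ∏ a : Fin h, w i (φ i a)

/-- Expectation over a random partitionwise map in `Φ(h)`. -/
noncomputable def EPhi {r : ℕ} (Ω : Fin r → Type) [∀ i, Fintype (Ω i)]
    (w : ∀ i, Ω i → ℝ) (h : ℕ) (f : PMap Ω h → ℝ) : ℝ :=
  ∑ φ : PMap Ω h, pmapWeight Ω w φ * f φ

/-- Conditional expectation over a random partitionwise map in `Φ(h)`. -/
noncomputable def EPhiCond {r : ℕ} (Ω : Fin r → Type) [∀ i, Fintype (Ω i)]
    (w : ∀ i, Ω i → ℝ) (h : ℕ) (A : PMap Ω h → Prop) (f : PMap Ω h → ℝ) : ℝ :=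
  (∑ φ : PMap Ω h, if A φ then pmapWeight Ω w φ * f φ else 0) /
  (∑ φ : PMap Ω h, if A φ then pmapWeight Ω w φ else 0)

/-- A colored `𝔯`-partite graph on vertex sets `Ω i`: color sets `C1 i` (for vertices,
i.e. index-`{i}` edges) and `C2 i j` (for index-`{i,j}` edges), together with coloring
maps, symmetric in the two endpoints. -/
structure CGraph {r : ℕ} (Ω : Fin r → Type) (K₁ K₂ : Type) where
  C1 : Fin r → Finset K₁
  C2 : Fin r → Fin r → Finset K₂
  vCol : ∀ i, Ω i → K₁
  eCol : ∀ i j, Ω i → Ω j → K₂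
  eSymm : ∀ i j x y, eCol i j x y = eCol j i y x
  c2Symm : ∀ i j, C2 i j = C2 j i
  vMem : ∀ i x, vCol i x ∈ C1 i
  eMem : ∀ i j x y, eCol i j x y ∈ C2 i j

/-- `G` is `(b₁,b₂)`-colored: each color set `C_I` has at most `b_{|I|}` elements. -/
def CGraph.Bounded {r : ℕ} {Ω : Fin r → Type} {K₁ K₂ : Type}
    (G : CGraph Ω K₁ K₂) (b₁ b₂ : ℕ) : Prop :=
  (∀ i, (G.C1 i).card ≤ b₁) ∧ ∀ i j, i ≠ j → (G.C2 i j).card ≤ b₂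

/-- Relative density `d_G(c)` of a vertex (index-`{i}`) total color `c`:
the probability that a random vertex of `Ω i` has color `c`. -/
noncomputable def dV {r : ℕ} (Ω : Fin r → Type) [∀ i, Fintype (Ω i)]
    (w : ∀ i, Ω i → ℝ) {K₁ K₂ : Type} (G : CGraph Ω K₁ K₂) (i : Fin r) (c : K₁) : ℝ :=
  ∑ x : Ω i, if G.vCol i x = c then w i x else 0

/-- Relative density `d_G(c₂; ci, cj)` of an index-`{i,j}` total color:
the conditional probability that a random edge has color `c₂` given that its
endpoints have colors `ci`, `cj`. -/
noncomputable def dE {r : ℕ} (Ω : Fin r → Type) [∀ i, Fintype (Ω i)]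
    (w : ∀ i, Ω i → ℝ) {K₁ K₂ : Type} (G : CGraph Ω K₁ K₂) (i j : Fin r)
    (c₂ : K₂) (ci cj : K₁) : ℝ :=
  (∑ x : Ω i, ∑ y : Ω j,
      if G.eCol i j x y = c₂ ∧ G.vCol i x = ci ∧ G.vCol j y = cj then w i x * w j y else 0) /
  (∑ x : Ω i, ∑ y : Ω j, if G.vCol i x = ci ∧ G.vCol j y = cj then w i x * w j y else 0)

/-- A (simplicial) complex with `h` vertices in each of the `r` parts: a colored
partite graph where `none` is the (unique) invisible color of each index, and any
edge containing an invisible vertex is invisible. -/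
structure SComplex (r h : ℕ) (K₁ K₂ : Type) where
  vCol : Fin r → Fin h → Option K₁
  eCol : Fin r → Fin r → Fin h → Fin h → Option K₂
  eSymm : ∀ i j a b, eCol i j a b = eCol j i b a
  loopless : ∀ i a b, eCol i i a b = none
  down : ∀ i j a b, vCol i a = none → eCol i j a b = none

/-- `S ∈ S_{h,G}` : the visible colors of the complex `S` are (identified with)
colors of `G`. -/
def SComplex.MemS {r h : ℕ} {Ω : Fin r → Type} {K₁ K₂ : Type}
    (S : SComplex r h K₁ K₂) (G : CGraph Ω K₁ K₂) : Prop :=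
  (∀ i a c, S.vCol i a = some c → c ∈ G.C1 i) ∧
  (∀ i j a b c, S.eCol i j a b = some c → c ∈ G.C2 i j)

/-- `𝕍₁(S)`: the visible vertices of `S`. -/
noncomputable def V1 {r h : ℕ} {K₁ K₂ : Type} (S : SComplex r h K₁ K₂) :
    Finset (Fin r × Fin h) :=
  univ.filter fun p => S.vCol p.1 p.2 ≠ none

/-- `𝕍₂(S)`: the visible (size-2) edges of `S`, listed once each (`i < j`). -/
noncomputable def V2 {r h : ℕ} {K₁ K₂ : Type} (S : SComplex r h K₁ K₂) :
    Finset (Fin r × Fin r × Fin h × Fin h) :=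
  univ.filter fun q => q.1 < q.2.1 ∧ S.eCol q.1 q.2.1 q.2.2.1 q.2.2.2 ≠ none

/-- `d_G(S⟨v⟩)` for a vertex `v` of `S` (junk value `1` on invisible vertices). -/
noncomputable def dVS {r h : ℕ} (Ω : Fin r → Type) [∀ i, Fintype (Ω i)]
    (w : ∀ i, Ω i → ℝ) {K₁ K₂ : Type} (G : CGraph Ω K₁ K₂)
    (S : SComplex r h K₁ K₂) (p : Fin r × Fin h) : ℝ :=
  match S.vCol p.1 p.2 with
  | some c => dV Ω w G p.1 c
  | none => 1

/-- `d_G(S⟨e⟩)` for a size-2 edge `e` of `S` (junk value `1` on invisible edges). -/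
noncomputable def dES {r h : ℕ} (Ω : Fin r → Type) [∀ i, Fintype (Ω i)]
    (w : ∀ i, Ω i → ℝ) {K₁ K₂ : Type} (G : CGraph Ω K₁ K₂)
    (S : SComplex r h K₁ K₂) (q : Fin r × Fin r × Fin h × Fin h) : ℝ :=
  match S.eCol q.1 q.2.1 q.2.2.1 q.2.2.2, S.vCol q.1 q.2.2.1, S.vCol q.2.1 q.2.2.2 with
  | some c₂, some ci, some cj => dE Ω w G q.1 q.2.1 c₂ ci cj
  | _, _, _ => 1

/-- The event `G(φ(v)) = S(v)` for all visible vertices `v` of `S`. -/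
def vEvent {r h : ℕ} {Ω : Fin r → Type} {K₁ K₂ : Type} (G : CGraph Ω K₁ K₂)
    (S : SComplex r h K₁ K₂) (φ : PMap Ω h) : Prop :=
  ∀ p ∈ V1 S, some (G.vCol p.1 (φ p.1 p.2)) = S.vCol p.1 p.2

/-- The event `G(φ(e)) = S(e)` for all visible size-2 edges `e` of `S`. -/
def eEvent {r h : ℕ} {Ω : Fin r → Type} {K₁ K₂ : Type} (G : CGraph Ω K₁ K₂)
    (S : SComplex r h K₁ K₂) (φ : PMap Ω h) : Prop :=
  ∀ q ∈ V2 S, some (G.eCol q.1 q.2.1 (φ q.1 q.2.2.1) (φ q.2.1 q.2.2.2)) =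
    S.eCol q.1 q.2.1 q.2.2.1 q.2.2.2

/-- `P_{φ∈Φ(h)}[G(φ(e)) = S(e) for all e ∈ 𝕍(S)]`. -/
noncomputable def countProb {r h : ℕ} (Ω : Fin r → Type) [∀ i, Fintype (Ω i)]
    (w : ∀ i, Ω i → ℝ) {K₁ K₂ : Type} (G : CGraph Ω K₁ K₂)
    (S : SComplex r h K₁ K₂) : ℝ :=
  EPhi Ω w h fun φ => if vEvent G S φ ∧ eEvent G S φ then 1 else 0

/-- Value of an error function `δ` (defined on index-2 total colors) at `S⟨e⟩`. -/
noncomputable def deltaS {r h : ℕ} {K₁ K₂ : Type} (δ : Fin r → Fin r → K₂ → K₁ → K₁ → ℝ)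
    (S : SComplex r h K₁ K₂) (q : Fin r × Fin r × Fin h × Fin h) : ℝ :=
  match S.eCol q.1 q.2.1 q.2.2.1 q.2.2.2, S.vCol q.1 q.2.2.1, S.vCol q.2.1 q.2.2.2 with
  | some c₂, some ci, some cj => δ q.1 q.2.1 c₂ ci cj
  | _, _, _ => 0

/-- The counting equation (\ref{lj19}) for one complex `S`:
`P[G(φ(e)) = S(e) ∀ e ∈ 𝕍(S)] = ∏_{v∈𝕍₁(S)} d_G(S⟨v⟩) · ∏_{e∈𝕍₂(S)} (d_G(S⟨e⟩) ±̇ δ(S⟨e⟩))`,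
where `a ±̇ b` denotes a suitable number `c` with `max 0 (a-b) ≤ c ≤ min 1 (a+b)`. -/
def CountEqAt {r h : ℕ} (Ω : Fin r → Type) [∀ i, Fintype (Ω i)]
    (w : ∀ i, Ω i → ℝ) {K₁ K₂ : Type} (G : CGraph Ω K₁ K₂)
    (δ : Fin r → Fin r → K₂ → K₁ → K₁ → ℝ) (S : SComplex r h K₁ K₂) : Prop :=
  ∃ c : Fin r × Fin r × Fin h × Fin h → ℝ,
    (∀ q ∈ V2 S, max 0 (dES Ω w G S q - deltaS δ S q) ≤ c q ∧
        c q ≤ min 1 (dES Ω w G S q + deltaS δ S q)) ∧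
    countProb Ω w G S = (∏ p ∈ V1 S, dVS Ω w G S p) * ∏ q ∈ V2 S, c q

/-- `δ` is an `h`-error function of `G`: the counting equation holds for every
`S ∈ S_{h,G}`. -/
def IsErrorFun {r : ℕ} (Ω : Fin r → Type) [∀ i, Fintype (Ω i)]
    (w : ∀ i, Ω i → ℝ) {K₁ K₂ : Type} (G : CGraph Ω K₁ K₂) (h : ℕ)
    (δ : Fin r → Fin r → K₂ → K₁ → K₁ → ℝ) : Prop :=
  ∀ S : SComplex r h K₁ K₂, S.MemS G → CountEqAt Ω w G δ S

/-- `E_{e∈Ω_I}[δ(G⟨e⟩)]` for `I = {i,j}`. -/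
noncomputable def EdgeDeltaAvg {r : ℕ} (Ω : Fin r → Type) [∀ i, Fintype (Ω i)]
    (w : ∀ i, Ω i → ℝ) {K₁ K₂ : Type} (G : CGraph Ω K₁ K₂)
    (δ : Fin r → Fin r → K₂ → K₁ → K₁ → ℝ) (i j : Fin r) : ℝ :=
  ∑ x : Ω i, ∑ y : Ω j,
    w i x * w j y * δ i j (G.eCol i j x y) (G.vCol i x) (G.vCol j y)

/-- `G` is `(ε,h)`-regular. -/
def IsRegularG {r : ℕ} (Ω : Fin r → Type) [∀ i, Fintype (Ω i)]
    (w : ∀ i, Ω i → ℝ) {K₁ K₂ : Type} (G : CGraph Ω K₁ K₂) (h : ℕ) (ε : ℝ) : Prop :=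
  ∃ δ : Fin r → Fin r → K₂ → K₁ → K₁ → ℝ,
    (∀ i j c₂ ci cj, 0 ≤ δ i j c₂ ci cj) ∧
    IsErrorFun Ω w G h δ ∧
    ∀ i j : Fin r, i ≠ j → EdgeDeltaAvg Ω w G δ i j ≤ ε / (G.C2 i j).card

/-- `reg_h(G)`: the minimum `ε` such that `G` is `(ε,h)`-regular. -/
noncomputable def reg {r : ℕ} (Ω : Fin r → Type) [∀ i, Fintype (Ω i)]
    (w : ∀ i, Ω i → ℝ) {K₁ K₂ : Type} (G : CGraph Ω K₁ K₂) (h : ℕ) : ℝ :=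
  sInf {ε : ℝ | IsRegularG Ω w G h ε}

/-- The regularization `G/φ` of `G` by a partitionwise map `φ ∈ Φ(m)`: each vertex
`v ∈ Ω i` is recolored by its original color together with the colors of all edges
joining `v` to the sample points of `φ` in the other parts. Size-2 edges keep
their colors. -/
noncomputable def regz {r : ℕ} (Ω : Fin r → Type) [∀ i, Fintype (Ω i)]
    {K₁ K₂ : Type} [Fintype K₁] [Fintype K₂] (G : CGraph Ω K₁ K₂) {m : ℕ}
    (φ : PMap Ω m) : CGraph Ω (K₁ × (Fin r → Fin m → Option K₂)) K₂ where
  C1 i := univ.filter fun p : K₁ × (Fin r → Fin m → Option K₂) =>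
    p.1 ∈ G.C1 i ∧ ∀ j b, if j = i then p.2 j b = none
      else ∃ c ∈ G.C2 i j, p.2 j b = some c
  C2 := G.C2
  vCol i x := (G.vCol i x, fun j b => if j = i then none else some (G.eCol i j x (φ j b)))
  eCol := G.eCol
  eSymm := G.eSymm
  c2Symm := G.c2Symm
  vMem := by
    intro i x
    simp only [mem_filter, mem_univ, true_and]
    refine ⟨G.vMem i x, fun j b => ?_⟩
    by_cases hj : j = i
    · simp [hj]
    · simp only [hj, if_neg hj]
      exact ⟨G.eCol i j x (φ j b), G.eMem i j x (φ j b), rfl⟩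
  eMem := G.eMem

/-- Conditional expectation of `f` over a random pair `e = (x,y) ∈ Ω_{i} × Ω_{j}`
given the event `A`. -/
noncomputable def condEE {r : ℕ} (Ω : Fin r → Type) [∀ i, Fintype (Ω i)]
    (w : ∀ i, Ω i → ℝ) (i j : Fin r) (A : Ω i → Ω j → Prop) (f : Ω i → Ω j → ℝ) : ℝ :=
  (∑ x : Ω i, ∑ y : Ω j, if A x y then w i x * w j y * f x y else 0) /
  (∑ x : Ω i, ∑ y : Ω j, if A x y then w i x * w j y else 0)

/-- `e ≈_{∂(G/ψ)} e'` : the two pairs have the same frame color in the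
regularization `G/ψ`. -/
def frameRel {r : ℕ} (Ω : Fin r → Type) [∀ i, Fintype (Ω i)]
    {K₁ K₂ : Type} [Fintype K₁] [Fintype K₂] (G : CGraph Ω K₁ K₂) {m : ℕ}
    (ψ : PMap Ω m) (i j : Fin r) (x : Ω i) (y : Ω j) (x' : Ω i) (y' : Ω j) : Prop :=
  (regz Ω G ψ).vCol i x = (regz Ω G ψ).vCol i x' ∧
  (regz Ω G ψ).vCol j y = (regz Ω G ψ).vCol j y'

/-- `η(c₂; ci, cj)` (eq. (\ref{061220})) computed in `G`, with `N` random sample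
vertices in each part (`N = M·h` in the paper). -/
noncomputable def eta {r : ℕ} (Ω : Fin r → Type) [∀ i, Fintype (Ω i)]
    (w : ∀ i, Ω i → ℝ) {K₁ K₂ : Type} [Fintype K₁] [Fintype K₂]
    (G : CGraph Ω K₁ K₂) (N : ℕ) (i j : Fin r) (c₂ : K₂) (ci cj : K₁) : ℝ :=
  EPhi Ω w N fun ψ =>
    condEE Ω w i j (fun x' y' => G.vCol i x' = ci ∧ G.vCol j y' = cj) fun x' y' =>
      (condEE Ω w i j (fun x y => frameRel Ω G ψ i j x y x' y')
          (fun x y => if G.eCol i j x y = c₂ then 1 else 0) -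
        dE Ω w G i j c₂ ci cj) ^ 2

/-- `η(S⟨e⟩)` for a size-2 edge of a complex `S` (junk value `0` if invisible). -/
noncomputable def etaS {r h : ℕ} (Ω : Fin r → Type) [∀ i, Fintype (Ω i)]
    (w : ∀ i, Ω i → ℝ) {K₁ K₂ : Type} [Fintype K₁] [Fintype K₂]
    (G : CGraph Ω K₁ K₂) (N : ℕ) (S : SComplex r h K₁ K₂)
    (q : Fin r × Fin r × Fin h × Fin h) : ℝ :=
  match S.eCol q.1 q.2.1 q.2.2.1 q.2.2.2, S.vCol q.1 q.2.2.1, S.vCol q.2.1 q.2.2.2 with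
  | some c₂, some ci, some cj => eta Ω w G N q.1 q.2.1 c₂ ci cj
  | _, _, _ => 0

/-- `ε₁ := (ε/(6 b₂ binom(r,2)))²`. -/
noncomputable def eps1 (r b₂ : ℕ) (ε : ℝ) : ℝ := (ε / (6 * b₂ * r.choose 2)) ^ 2

/-- `C := √2 · binom(r,2) h² · (b₂/√ε₁)^{binom(r,2)h² − 1}`. -/
noncomputable def Cconst (r h b₂ : ℕ) (ε : ℝ) : ℝ :=
  Real.sqrt 2 * r.choose 2 * h ^ 2 *
    ((b₂ : ℝ) / Real.sqrt (eps1 r b₂ ε)) ^ (r.choose 2 * h ^ 2 - 1)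

/-- `M(m) := (b₁ b₂^{(r−1)m} / √ε₁)^{rh}` (as a sample count). -/
noncomputable def Mconst (r h b₁ b₂ : ℕ) (ε : ℝ) (m : ℕ) : ℕ :=
  ⌈(((b₁ : ℝ) * (b₂ : ℝ) ^ ((r - 1) * m)) / Real.sqrt (eps1 r b₂ ε)) ^ (r * h)⌉₊

/-- A vertex total color `c` of index `{i}` is bad. -/
def BadV {r : ℕ} (Ω : Fin r → Type) [∀ i, Fintype (Ω i)]
    (w : ∀ i, Ω i → ℝ) {K₁ K₂ : Type} (G : CGraph Ω K₁ K₂) (ε₁ : ℝ)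
    (i : Fin r) (c : K₁) : Prop :=
  dV Ω w G i c ≤ Real.sqrt ε₁ / (G.C1 i).card

/-- An index-`{i,j}` total color `(c₂; ci, cj)` is bad: some nonempty `I* ⊆ {i,j}`
has relative density at most `√ε₁/|C_{I*}|`. -/
def BadE {r : ℕ} (Ω : Fin r → Type) [∀ i, Fintype (Ω i)]
    (w : ∀ i, Ω i → ℝ) {K₁ K₂ : Type} (G : CGraph Ω K₁ K₂) (ε₁ : ℝ)
    (i j : Fin r) (c₂ : K₂) (ci cj : K₁) : Prop :=
  BadV Ω w G ε₁ i ci ∨ BadV Ω w G ε₁ j cj ∨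
    dE Ω w G i j c₂ ci cj ≤ Real.sqrt ε₁ / (G.C2 i j).card

/-- The error function `δ` of the paper: `1` on bad total colors, `C·√η` otherwise. -/
noncomputable def deltaDef {r : ℕ} (Ω : Fin r → Type) [∀ i, Fintype (Ω i)]
    (w : ∀ i, Ω i → ℝ) {K₁ K₂ : Type} [Fintype K₁] [Fintype K₂]
    (G : CGraph Ω K₁ K₂) (ε₁ Cc : ℝ) (N : ℕ)
    (i j : Fin r) (c₂ : K₂) (ci cj : K₁) : ℝ :=
  if BadE Ω w G ε₁ i j c₂ ci cj then 1 else Cc * Real.sqrt (eta Ω w G N i j c₂ ci cj)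

/-- `∏_{e∈D}(𝟙[G(φ(e)) = S(e)] − d_G(S⟨e⟩))`, single factor. -/
noncomputable def indMinusD {r h : ℕ} (Ω : Fin r → Type) [∀ i, Fintype (Ω i)]
    (w : ∀ i, Ω i → ℝ) {K₁ K₂ : Type} (G : CGraph Ω K₁ K₂)
    (S : SComplex r h K₁ K₂) (φ : PMap Ω h) (q : Fin r × Fin r × Fin h × Fin h) : ℝ :=
  (if some (G.eCol q.1 q.2.1 (φ q.1 q.2.2.1) (φ q.2.1 q.2.2.2)) =
      S.eCol q.1 q.2.1 q.2.2.1 q.2.2.2 then 1 else 0) - dES Ω w G S q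

/-- The total color `S⟨v⟩` of a vertex of the complex `S` is bad. -/
def BadVS {r h : ℕ} (Ω : Fin r → Type) [∀ i, Fintype (Ω i)]
    (w : ∀ i, Ω i → ℝ) {K₁ K₂ : Type} (G : CGraph Ω K₁ K₂) (ε₁ : ℝ)
    (S : SComplex r h K₁ K₂) (p : Fin r × Fin h) : Prop :=
  match S.vCol p.1 p.2 with
  | some c => BadV Ω w G ε₁ p.1 c
  | none => False

/-- The total color `S⟨e⟩` of a size-2 edge of the complex `S` is bad. -/
def BadES {r h : ℕ} (Ω : Fin r → Type) [∀ i, Fintype (Ω i)]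
    (w : ∀ i, Ω i → ℝ) {K₁ K₂ : Type} (G : CGraph Ω K₁ K₂) (ε₁ : ℝ)
    (S : SComplex r h K₁ K₂) (q : Fin r × Fin r × Fin h × Fin h) : Prop :=
  match S.eCol q.1 q.2.1 q.2.2.1 q.2.2.2, S.vCol q.1 q.2.2.1, S.vCol q.2.1 q.2.2.2 with
  | some c₂, some ci, some cj => BadE Ω w G ε₁ q.1 q.2.1 c₂ ci cj
  | _, _, _ => False

/-!
Make every bad vertex and every bad edge of `S` invisible. The pruned complex `S'` has no bad
total color, so the counting equation holds for it. The bad vertices are isolated in `S'`, so by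
independence of the sample points `P[S] ≤ P[S'] · ∏_{v bad} d(S⟨v⟩)`, with equality when `S` has
no bad edge; then this is already the counting equation for `S`. Otherwise a bad edge carries the
error `δ = 1`, so its factor may be any number in `[0, 1]`, and it absorbs the slack.

The hypothesis on `δ` only concerns total colors that occur in `G`; a visible edge whose total
color does not occur has density `0` and is never hit, so both sides of the equation vanish.
-/

namespace PMap

variable {r h : ℕ} {Ω : Fin r → Type}

def update (φ : PMap Ω h) (i : Fin r) (a : Fin h) (x : Ω i) : PMap Ω h :=
  Function.update φ i (Function.update (φ i) a x)

@[simp]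
lemma update_apply_same (φ : PMap Ω h) (i : Fin r) (a : Fin h) (x : Ω i) :
    update φ i a x i a = x := by
  simp [update]

lemma update_apply_of_ne (φ : PMap Ω h) {i j : Fin r} {a b : Fin h} (x : Ω i)
    (hne : (j, b) ≠ (i, a)) : update φ i a x j b = φ j b := by
  rcases eq_or_ne j i with rfl | hji
  · have hba : b ≠ a := fun hba => hne (by rw [hba])
    simp [update, Function.update_of_ne hba]
  · simp [update, Function.update_of_ne hji]

@[simp]
lemma update_update_apply_self (φ : PMap Ω h) (i : Fin r) (a : Fin h) (x : Ω i) :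
    update (update φ i a x) i a (φ i a) = φ := by
  simp [update, Function.update_idem, Function.update_eq_self]

end PMap

section Expectation

variable {r h : ℕ} {Ω : Fin r → Type} [∀ i, Fintype (Ω i)] {w : ∀ i, Ω i → ℝ}

lemma pmapWeight_nonneg (hw : ∀ i x, 0 ≤ w i x) (φ : PMap Ω h) : 0 ≤ pmapWeight Ω w φ :=
  prod_nonneg fun i _ => prod_nonneg fun a _ => hw i (φ i a)

lemma pmapWeight_update_mul (φ : PMap Ω h) (i : Fin r) (a : Fin h) (x : Ω i) :
    pmapWeight Ω w (PMap.update φ i a x) * w i (φ i a) = pmapWeight Ω w φ * w i x := by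
  have split : ∀ ψ : PMap Ω h, pmapWeight Ω w ψ =
      w i (ψ i a) * (∏ b ∈ univ.erase a, w i (ψ i b)) *
        ∏ j ∈ univ.erase i, ∏ b, w j (ψ j b) := fun ψ => by
    rw [pmapWeight, ← mul_prod_erase univ _ (mem_univ i), ← mul_prod_erase univ _ (mem_univ a)]
  have same_row : ∀ b ∈ univ.erase a, w i (PMap.update φ i a x i b) = w i (φ i b) :=
    fun b hb => by
      rw [PMap.update_apply_of_ne φ x fun hba => (mem_erase.mp hb).1 (congrArg Prod.snd hba)]
  have other_rows : ∀ j ∈ univ.erase i,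
      ∏ b, w j (PMap.update φ i a x j b) = ∏ b, w j (φ j b) := fun j hj =>
    prod_congr rfl fun b _ => by
      rw [PMap.update_apply_of_ne φ x fun hji => (mem_erase.mp hj).1 (congrArg Prod.fst hji)]
  rw [split, split φ, PMap.update_apply_same, prod_congr rfl same_row, prod_congr rfl other_rows]
  ring

lemma EPhi_nonneg (hw : ∀ i x, 0 ≤ w i x) {f : PMap Ω h → ℝ} (hf : ∀ φ, 0 ≤ f φ) :
    0 ≤ EPhi Ω w h f :=
  sum_nonneg fun φ _ => mul_nonneg (pmapWeight_nonneg hw φ) (hf φ)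

lemma EPhi_mono (hw : ∀ i x, 0 ≤ w i x) {f g : PMap Ω h → ℝ} (hfg : ∀ φ, f φ ≤ g φ) :
    EPhi Ω w h f ≤ EPhi Ω w h g :=
  sum_le_sum fun φ _ => mul_le_mul_of_nonneg_left (hfg φ) (pmapWeight_nonneg hw φ)

theorem EPhi_mul_apply (htot : ∀ i, ∑ x : Ω i, w i x = 1) (i : Fin r) (a : Fin h)
    {F : PMap Ω h → ℝ} (hF : ∀ φ x, F (PMap.update φ i a x) = F φ) (g : Ω i → ℝ) :
    EPhi Ω w h (fun φ => F φ * g (φ i a)) = EPhi Ω w h F * ∑ x : Ω i, w i x * g x := by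
  -- Exchanging `φ i a` with a fresh independent sample is a weight-preserving involution.
  have hswap : Function.Involutive fun q : PMap Ω h × Ω i => (PMap.update q.1 i a q.2, q.1 i a) :=
    fun q => by simp
  calc EPhi Ω w h (fun φ => F φ * g (φ i a))
      = ∑ q : PMap Ω h × Ω i, pmapWeight Ω w q.1 * (F q.1 * g (q.1 i a)) * w i q.2 := by
        rw [Fintype.sum_prod_type, EPhi]
        simp only [← mul_sum, htot, mul_one]
    _ = ∑ q : PMap Ω h × Ω i, pmapWeight Ω w (PMap.update q.1 i a q.2) *
          (F (PMap.update q.1 i a q.2) * g q.2) * w i (q.1 i a) := by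
        refine (Equiv.sum_comp (hswap.toPerm _) _).symm.trans ?_
        simp
    _ = ∑ q : PMap Ω h × Ω i, pmapWeight Ω w q.1 * F q.1 * (w i q.2 * g q.2) := by
        refine Fintype.sum_congr _ _ fun q => ?_
        rw [hF, mul_right_comm, pmapWeight_update_mul]
        ring
    _ = EPhi Ω w h F * ∑ x : Ω i, w i x * g x := by
        rw [EPhi, sum_mul_sum, Fintype.sum_prod_type]

theorem EPhi_mul_prod_apply (htot : ∀ i, ∑ x : Ω i, w i x = 1) (T : Finset (Fin r × Fin h))
    {F : PMap Ω h → ℝ} (hF : ∀ p ∈ T, ∀ φ x, F (PMap.update φ p.1 p.2 x) = F φ)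
    (g : ∀ p : Fin r × Fin h, Ω p.1 → ℝ) :
    EPhi Ω w h (fun φ => F φ * ∏ p ∈ T, g p (φ p.1 p.2)) =
      EPhi Ω w h F * ∏ p ∈ T, ∑ x : Ω p.1, w p.1 x * g p x := by
  induction T using Finset.induction_on with
  | empty => simp
  | @insert p₀ T hp₀ ih =>
    have hrest : ∀ φ x, F (PMap.update φ p₀.1 p₀.2 x) *
        ∏ p ∈ T, g p (PMap.update φ p₀.1 p₀.2 x p.1 p.2) = F φ * ∏ p ∈ T, g p (φ p.1 p.2) := by
      intro φ x
      rw [hF p₀ (mem_insert_self _ _)]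
      congr 1
      refine prod_congr rfl fun p hp => ?_
      rw [PMap.update_apply_of_ne φ x fun hpp => hp₀ (by rwa [← Prod.mk.eta (p := p), hpp] at hp)]
    simp only [prod_insert hp₀, ← mul_assoc, mul_right_comm _ (g p₀ _)]
    rw [EPhi_mul_apply htot p₀.1 p₀.2 hrest, ih fun p hp => hF p (mem_insert_of_mem hp)]
    ring

end Expectation

section Densities

variable {r : ℕ} {Ω : Fin r → Type} [∀ i, Fintype (Ω i)] {w : ∀ i, Ω i → ℝ} {K₁ K₂ : Type}
  (G : CGraph Ω K₁ K₂)

variable {G} in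
lemma dE_nonneg_and_le_one (hw : ∀ i x, 0 ≤ w i x) (i j : Fin r) (c₂ : K₂) (ci cj : K₁) :
    0 ≤ dE Ω w G i j c₂ ci cj ∧ dE Ω w G i j c₂ ci cj ≤ 1 := by
  have hnum : ∀ x y, 0 ≤ if G.eCol i j x y = c₂ ∧ G.vCol i x = ci ∧ G.vCol j y = cj
      then w i x * w j y else 0 := fun x y => by split_ifs <;> simp [mul_nonneg, hw]
  have hden : ∀ x y, 0 ≤ if G.vCol i x = ci ∧ G.vCol j y = cj then w i x * w j y else 0 :=
    fun x y => by split_ifs <;> simp [mul_nonneg, hw]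
  refine ⟨div_nonneg (sum_nonneg fun x _ => sum_nonneg fun y _ => hnum x y)
      (sum_nonneg fun x _ => sum_nonneg fun y _ => hden x y),
    div_le_one_of_le₀ (sum_le_sum fun x _ => sum_le_sum fun y _ => ?_)
      (sum_nonneg fun x _ => sum_nonneg fun y _ => hden x y)⟩
  by_cases hc : G.eCol i j x y = c₂ ∧ G.vCol i x = ci ∧ G.vCol j y = cj
  · simp [hc]
  · rw [if_neg hc]
    exact hden x y

lemma dE_comm (i j : Fin r) (c₂ : K₂) (ci cj : K₁) :
    dE Ω w G i j c₂ ci cj = dE Ω w G j i c₂ cj ci := by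
  unfold dE
  congr 1 <;> rw [sum_comm] <;> refine sum_congr rfl fun y _ => sum_congr rfl fun x _ => ?_
  · rw [G.eSymm i j, mul_comm]
    exact if_congr (by tauto) rfl rfl
  · rw [mul_comm]
    exact if_congr (by tauto) rfl rfl

lemma dE_eq_zero_of_not_exists {i j : Fin r} {c₂ : K₂} {ci cj : K₁}
    (hne : ¬ ∃ (x : Ω i) (y : Ω j), G.eCol i j x y = c₂ ∧ G.vCol i x = ci ∧ G.vCol j y = cj) :
    dE Ω w G i j c₂ ci cj = 0 := by
  unfold dE
  rw [sum_eq_zero fun x _ => sum_eq_zero fun y _ => if_neg fun hc => hne ⟨x, y, hc⟩, zero_div]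

lemma badE_comm (ε₁ : ℝ) (i j : Fin r) (c₂ : K₂) (ci cj : K₁) :
    BadE Ω w G ε₁ i j c₂ ci cj ↔ BadE Ω w G ε₁ j i c₂ cj ci := by
  unfold BadE
  rw [dE_comm G i j c₂ ci cj, G.c2Symm i j]
  tauto

end Densities

namespace SComplex

variable {r h : ℕ} {K₁ K₂ : Type} {S : SComplex r h K₁ K₂} {i j : Fin r} {a b : Fin h}

lemma vCol_ne_none_left (hvis : S.eCol i j a b ≠ none) : S.vCol i a ≠ none :=
  fun hv => hvis (S.down i j a b hv)

lemma vCol_ne_none_right (hvis : S.eCol i j a b ≠ none) : S.vCol j b ≠ none :=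
  vCol_ne_none_left (by rwa [← S.eSymm])

lemma exists_colors_of_eCol_ne_none (hvis : S.eCol i j a b ≠ none) :
    ∃ c₂ ci cj, S.eCol i j a b = some c₂ ∧ S.vCol i a = some ci ∧ S.vCol j b = some cj := by
  obtain ⟨c₂, h₂⟩ := Option.ne_none_iff_exists'.mp hvis
  obtain ⟨ci, hi⟩ := Option.ne_none_iff_exists'.mp (vCol_ne_none_left hvis)
  obtain ⟨cj, hj⟩ := Option.ne_none_iff_exists'.mp (vCol_ne_none_right hvis)
  exact ⟨c₂, ci, cj, h₂, hi, hj⟩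

end SComplex

section ComplexDensities

variable {r h : ℕ} {Ω : Fin r → Type} [∀ i, Fintype (Ω i)] {w : ∀ i, Ω i → ℝ} {K₁ K₂ : Type}
  {G : CGraph Ω K₁ K₂} {S : SComplex r h K₁ K₂}

@[simp]
lemma mem_V1 {p : Fin r × Fin h} : p ∈ V1 S ↔ S.vCol p.1 p.2 ≠ none := by
  simp [V1]

@[simp]
lemma mem_V2 {q : Fin r × Fin r × Fin h × Fin h} :
    q ∈ V2 S ↔ q.1 < q.2.1 ∧ S.eCol q.1 q.2.1 q.2.2.1 q.2.2.2 ≠ none := by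
  simp [V2]

section Colors

variable {i j : Fin r} {a b : Fin h} {c₂ : K₂} {ci cj : K₁}

lemma dES_of_eq_some (h₂ : S.eCol i j a b = some c₂) (hi : S.vCol i a = some ci)
    (hj : S.vCol j b = some cj) : dES Ω w G S (i, j, a, b) = dE Ω w G i j c₂ ci cj := by
  simp [dES, h₂, hi, hj]

lemma deltaS_of_eq_some {δ : Fin r → Fin r → K₂ → K₁ → K₁ → ℝ} (h₂ : S.eCol i j a b = some c₂)
    (hi : S.vCol i a = some ci) (hj : S.vCol j b = some cj) :
    deltaS δ S (i, j, a, b) = δ i j c₂ ci cj := by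
  simp [deltaS, h₂, hi, hj]

lemma badES_iff_of_eq_some {ε₁ : ℝ} (h₂ : S.eCol i j a b = some c₂) (hi : S.vCol i a = some ci)
    (hj : S.vCol j b = some cj) :
    BadES Ω w G ε₁ S (i, j, a, b) ↔ BadE Ω w G ε₁ i j c₂ ci cj := by
  simp [BadES, h₂, hi, hj]

end Colors

lemma badVS_iff_of_eq_some {ε₁ : ℝ} {i : Fin r} {a : Fin h} {c : K₁} (hc : S.vCol i a = some c) :
    BadVS Ω w G ε₁ S (i, a) ↔ BadV Ω w G ε₁ i c := by
  simp [BadVS, hc]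

lemma dES_nonneg_and_le_one (hw : ∀ i x, 0 ≤ w i x) (q : Fin r × Fin r × Fin h × Fin h) :
    0 ≤ dES Ω w G S q ∧ dES Ω w G S q ≤ 1 := by
  unfold dES
  split
  · exact dE_nonneg_and_le_one hw _ _ _ _ _
  · exact ⟨zero_le_one, le_rfl⟩

lemma deltaS_nonneg {δ : Fin r → Fin r → K₂ → K₁ → K₁ → ℝ}
    (hδ0 : ∀ i j c₂ ci cj, 0 ≤ δ i j c₂ ci cj) (q : Fin r × Fin r × Fin h × Fin h) :
    0 ≤ deltaS δ S q := by
  unfold deltaS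
  split
  · exact hδ0 _ _ _ _ _
  · exact le_rfl

lemma badES_swap (ε₁ : ℝ) (i j : Fin r) (a b : Fin h) :
    BadES Ω w G ε₁ S (i, j, a, b) ↔ BadES Ω w G ε₁ S (j, i, b, a) := by
  by_cases hvis : S.eCol i j a b = none
  · have hvis' : S.eCol j i b a = none := by rwa [← S.eSymm]
    simp [BadES, hvis, hvis']
  · obtain ⟨c₂, ci, cj, h₂, hi, hj⟩ := SComplex.exists_colors_of_eCol_ne_none hvis
    rw [badES_iff_of_eq_some h₂ hi hj, badES_iff_of_eq_some (by rwa [← S.eSymm]) hj hi]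
    exact badE_comm G ε₁ i j c₂ ci cj

lemma badES_of_badVS_left {ε₁ : ℝ} {i j : Fin r} {a b : Fin h} (hvis : S.eCol i j a b ≠ none)
    (hbad : BadVS Ω w G ε₁ S (i, a)) : BadES Ω w G ε₁ S (i, j, a, b) := by
  obtain ⟨c₂, ci, cj, h₂, hi, hj⟩ := SComplex.exists_colors_of_eCol_ne_none hvis
  exact (badES_iff_of_eq_some h₂ hi hj).mpr (Or.inl ((badVS_iff_of_eq_some hi).mp hbad))

lemma badES_of_badVS_right {ε₁ : ℝ} {i j : Fin r} {a b : Fin h} (hvis : S.eCol i j a b ≠ none)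
    (hbad : BadVS Ω w G ε₁ S (j, b)) : BadES Ω w G ε₁ S (i, j, a, b) :=
  (badES_swap ε₁ i j a b).mpr (badES_of_badVS_left (by rwa [← S.eSymm]) hbad)

end ComplexDensities

/-- `IsPmDot c a b` says that `c = a ±̇ b`. -/
def IsPmDot (c a b : ℝ) : Prop := max 0 (a - b) ≤ c ∧ c ≤ min 1 (a + b)

lemma isPmDot_self {a b : ℝ} (ha : 0 ≤ a ∧ a ≤ 1) (hb : 0 ≤ b) : IsPmDot a a b :=
  ⟨max_le ha.1 (by linarith), le_min ha.2 (by linarith)⟩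

lemma isPmDot_one {a t : ℝ} (ha : 0 ≤ a ∧ a ≤ 1) (ht : t ∈ Set.Icc (0 : ℝ) 1) : IsPmDot t a 1 :=
  ⟨max_le ht.1 (by linarith [ht.1]), le_min ht.2 (by linarith [ht.2])⟩

lemma exists_mem_Icc_eq_mul {x A : ℝ} (hx : 0 ≤ x) (hxA : x ≤ A) :
    ∃ t ∈ Set.Icc (0 : ℝ) 1, x = A * t := by
  rcases (hx.trans hxA).eq_or_lt with hA | hA
  · exact ⟨0, by simp, by rw [mul_zero]; linarith⟩
  · exact ⟨x / A, ⟨div_nonneg hx hA.le, div_le_one_of_le₀ hxA hA.le⟩, by field_simp⟩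

def EdgeRealized {r h : ℕ} {Ω : Fin r → Type} {K₁ K₂ : Type} (G : CGraph Ω K₁ K₂)
    (S : SComplex r h K₁ K₂) (q : Fin r × Fin r × Fin h × Fin h) : Prop :=
  ∃ (x : Ω q.1) (y : Ω q.2.1), some (G.eCol q.1 q.2.1 x y) = S.eCol q.1 q.2.1 q.2.2.1 q.2.2.2 ∧
    some (G.vCol q.1 x) = S.vCol q.1 q.2.2.1 ∧ some (G.vCol q.2.1 y) = S.vCol q.2.1 q.2.2.2

lemma edgeRealized_of_event {r h : ℕ} {Ω : Fin r → Type} {K₁ K₂ : Type} {G : CGraph Ω K₁ K₂}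
    {S : SComplex r h K₁ K₂} {q : Fin r × Fin r × Fin h × Fin h} (hq : q ∈ V2 S) {φ : PMap Ω h}
    (hφ : vEvent G S φ ∧ eEvent G S φ) : EdgeRealized G S q := by
  have hvis := (mem_V2.mp hq).2
  exact ⟨φ q.1 q.2.2.1, φ q.2.1 q.2.2.2, hφ.2 q hq,
    hφ.1 (q.1, q.2.2.1) (mem_V1.mpr (SComplex.vCol_ne_none_left hvis)),
    hφ.1 (q.2.1, q.2.2.2) (mem_V1.mpr (SComplex.vCol_ne_none_right hvis))⟩

section Realized

variable {r h : ℕ} {Ω : Fin r → Type} [∀ i, Fintype (Ω i)] {w : ∀ i, Ω i → ℝ} {K₁ K₂ : Type}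
  {G : CGraph Ω K₁ K₂} {S : SComplex r h K₁ K₂} {δ : Fin r → Fin r → K₂ → K₁ → K₁ → ℝ}
  {q : Fin r × Fin r × Fin h × Fin h}

lemma countProb_eq_zero_of_not_edgeRealized (hq : q ∈ V2 S) (hq' : ¬ EdgeRealized G S q) :
    countProb Ω w G S = 0 :=
  sum_eq_zero fun _ _ =>
    mul_eq_zero_of_right _ (if_neg fun hφ => hq' (edgeRealized_of_event hq hφ))

lemma dES_eq_zero_of_not_edgeRealized (hq : q ∈ V2 S) (hq' : ¬ EdgeRealized G S q) :
    dES Ω w G S q = 0 := by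
  obtain ⟨i, j, a, b⟩ := q
  obtain ⟨c₂, ci, cj, h₂, hi, hj⟩ := SComplex.exists_colors_of_eCol_ne_none (mem_V2.mp hq).2
  rw [dES_of_eq_some h₂ hi hj]
  refine dE_eq_zero_of_not_exists G fun ⟨x, y, hxy, hx, hy⟩ => hq' ⟨x, y, ?_, ?_, ?_⟩ <;>
    simp_all

lemma countEqAt_of_not_edgeRealized (hw : ∀ i x, 0 ≤ w i x)
    (hδ0 : ∀ i j c₂ ci cj, 0 ≤ δ i j c₂ ci cj) (hq : q ∈ V2 S) (hq' : ¬ EdgeRealized G S q) :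
    CountEqAt Ω w G δ S :=
  ⟨dES Ω w G S, fun q _ => isPmDot_self (dES_nonneg_and_le_one hw q) (deltaS_nonneg hδ0 q), by
    rw [countProb_eq_zero_of_not_edgeRealized hq hq',
      prod_eq_zero hq (dES_eq_zero_of_not_edgeRealized hq hq'), mul_zero]⟩

lemma deltaS_eq_one_of_badES {ε₁ : ℝ}
    (hδbad : ∀ (i j : Fin r), i ≠ j → ∀ (x : Ω i) (y : Ω j),
      BadE Ω w G ε₁ i j (G.eCol i j x y) (G.vCol i x) (G.vCol j y) →
        δ i j (G.eCol i j x y) (G.vCol i x) (G.vCol j y) = 1)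
    (hq : q ∈ V2 S) (hbad : BadES Ω w G ε₁ S q) (hreal : EdgeRealized G S q) :
    deltaS δ S q = 1 := by
  obtain ⟨i, j, a, b⟩ := q
  obtain ⟨x, y, h₂, hi, hj⟩ := hreal
  dsimp only at h₂ hi hj
  rw [deltaS_of_eq_some h₂.symm hi.symm hj.symm]
  exact hδbad i j (mem_V2.mp hq).1.ne x y ((badES_iff_of_eq_some h₂.symm hi.symm hj.symm).mp hbad)

end Realized

noncomputable def pruneBad {r h : ℕ} (Ω : Fin r → Type) [∀ i, Fintype (Ω i)] (w : ∀ i, Ω i → ℝ)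
    {K₁ K₂ : Type} (G : CGraph Ω K₁ K₂) (ε₁ : ℝ) (S : SComplex r h K₁ K₂) :
    SComplex r h K₁ K₂ where
  vCol i a := if BadVS Ω w G ε₁ S (i, a) then none else S.vCol i a
  eCol i j a b := if BadES Ω w G ε₁ S (i, j, a, b) then none else S.eCol i j a b
  eSymm i j a b := by rw [badES_swap, S.eSymm]
  loopless i a b := by simp [S.loopless]
  down i j a b hv := by
    by_cases hbad : BadES Ω w G ε₁ S (i, j, a, b)
    · exact if_pos hbad
    · rw [if_neg hbad]
      by_cases hbv : BadVS Ω w G ε₁ S (i, a)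
      · by_contra hvis
        exact hbad (badES_of_badVS_left hvis hbv)
      · exact S.down i j a b ((if_neg hbv).symm.trans hv)

noncomputable def V1Bad {r h : ℕ} (Ω : Fin r → Type) [∀ i, Fintype (Ω i)] (w : ∀ i, Ω i → ℝ)
    {K₁ K₂ : Type} (G : CGraph Ω K₁ K₂) (ε₁ : ℝ) (S : SComplex r h K₁ K₂) :
    Finset (Fin r × Fin h) :=
  (V1 S).filter (BadVS Ω w G ε₁ S)

section Prune

variable {r h : ℕ} {Ω : Fin r → Type} [∀ i, Fintype (Ω i)] {w : ∀ i, Ω i → ℝ} {K₁ K₂ : Type}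
  {G : CGraph Ω K₁ K₂} {ε₁ : ℝ} {S : SComplex r h K₁ K₂}

lemma mem_V1_pruneBad {p : Fin r × Fin h} :
    p ∈ V1 (pruneBad Ω w G ε₁ S) ↔ p ∈ V1 S ∧ ¬ BadVS Ω w G ε₁ S p := by
  by_cases hb : BadVS Ω w G ε₁ S p <;> simp [pruneBad, hb]

lemma mem_V2_pruneBad {q : Fin r × Fin r × Fin h × Fin h} :
    q ∈ V2 (pruneBad Ω w G ε₁ S) ↔ q ∈ V2 S ∧ ¬ BadES Ω w G ε₁ S q := by
  by_cases hb : BadES Ω w G ε₁ S q <;> simp [pruneBad, hb]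

lemma vCol_pruneBad_of_mem {p : Fin r × Fin h} (hp : p ∈ V1 (pruneBad Ω w G ε₁ S)) :
    (pruneBad Ω w G ε₁ S).vCol p.1 p.2 = S.vCol p.1 p.2 :=
  if_neg (mem_V1_pruneBad.mp hp).2

lemma colors_pruneBad_of_mem {q : Fin r × Fin r × Fin h × Fin h}
    (hq : q ∈ V2 (pruneBad Ω w G ε₁ S)) :
    (pruneBad Ω w G ε₁ S).eCol q.1 q.2.1 q.2.2.1 q.2.2.2 = S.eCol q.1 q.2.1 q.2.2.1 q.2.2.2 ∧
      (pruneBad Ω w G ε₁ S).vCol q.1 q.2.2.1 = S.vCol q.1 q.2.2.1 ∧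
      (pruneBad Ω w G ε₁ S).vCol q.2.1 q.2.2.2 = S.vCol q.2.1 q.2.2.2 := by
  obtain ⟨hqS, hgood⟩ := mem_V2_pruneBad.mp hq
  have hvis := (mem_V2.mp hqS).2
  exact ⟨if_neg hgood, if_neg fun hb => hgood (badES_of_badVS_left hvis hb),
    if_neg fun hb => hgood (badES_of_badVS_right hvis hb)⟩

lemma dVS_pruneBad {p : Fin r × Fin h} (hp : p ∈ V1 (pruneBad Ω w G ε₁ S)) :
    dVS Ω w G (pruneBad Ω w G ε₁ S) p = dVS Ω w G S p := by
  unfold dVS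
  rw [vCol_pruneBad_of_mem hp]

lemma dES_pruneBad {q : Fin r × Fin r × Fin h × Fin h} (hq : q ∈ V2 (pruneBad Ω w G ε₁ S)) :
    dES Ω w G (pruneBad Ω w G ε₁ S) q = dES Ω w G S q := by
  obtain ⟨h₂, hi, hj⟩ := colors_pruneBad_of_mem hq
  unfold dES
  rw [h₂, hi, hj]

lemma deltaS_pruneBad {δ : Fin r → Fin r → K₂ → K₁ → K₁ → ℝ} {q : Fin r × Fin r × Fin h × Fin h}
    (hq : q ∈ V2 (pruneBad Ω w G ε₁ S)) : deltaS δ (pruneBad Ω w G ε₁ S) q = deltaS δ S q := by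
  obtain ⟨h₂, hi, hj⟩ := colors_pruneBad_of_mem hq
  unfold deltaS
  rw [h₂, hi, hj]

lemma memS_pruneBad (hS : S.MemS G) : (pruneBad Ω w G ε₁ S).MemS G := by
  refine ⟨fun i a c hc => hS.1 i a c ?_, fun i j a b c hc => hS.2 i j a b c ?_⟩ <;>
    simp only [pruneBad] at hc <;> split_ifs at hc <;> exact hc

lemma pruneBad_not_badVS :
    ∀ p ∈ V1 (pruneBad Ω w G ε₁ S), ¬ BadVS Ω w G ε₁ (pruneBad Ω w G ε₁ S) p := by
  intro p hp
  have hcol := vCol_pruneBad_of_mem hp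
  have hgood := (mem_V1_pruneBad.mp hp).2
  unfold BadVS at hgood ⊢
  rwa [hcol]

lemma pruneBad_not_badES :
    ∀ q ∈ V2 (pruneBad Ω w G ε₁ S), ¬ BadES Ω w G ε₁ (pruneBad Ω w G ε₁ S) q := by
  intro q hq
  obtain ⟨h₂, hi, hj⟩ := colors_pruneBad_of_mem hq
  have hgood := (mem_V2_pruneBad.mp hq).2
  unfold BadES at hgood ⊢
  rwa [h₂, hi, hj]

end Prune

lemma event_update_iff {r h : ℕ} {Ω : Fin r → Type} {K₁ K₂ : Type} {G : CGraph Ω K₁ K₂}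
    {R : SComplex r h K₁ K₂} {i : Fin r} {a : Fin h} (hv : R.vCol i a = none)
    (φ : PMap Ω h) (x : Ω i) :
    (vEvent G R (PMap.update φ i a x) ∧ eEvent G R (PMap.update φ i a x)) ↔
      (vEvent G R φ ∧ eEvent G R φ) := by
  have hfix : ∀ j b, R.vCol j b ≠ none → PMap.update φ i a x j b = φ j b := by
    intro j b hjb
    refine PMap.update_apply_of_ne φ x fun hja => hjb ?_
    obtain ⟨rfl, rfl⟩ := Prod.mk.inj hja
    exact hv
  refine and_congr (forall₂_congr fun p hp => ?_) (forall₂_congr fun q hq => ?_)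
  · rw [hfix _ _ (mem_V1.mp hp)]
  · have hvis := (mem_V2.mp hq).2
    rw [hfix _ _ (SComplex.vCol_ne_none_left hvis), hfix _ _ (SComplex.vCol_ne_none_right hvis)]

lemma ite_and_forall_eq_mul_prod {ι : Type*} (P : Prop) [Decidable P] (s : Finset ι) (Q : ι → Prop)
    [DecidablePred Q] [Decidable (∀ i ∈ s, Q i)] :
    (if P ∧ ∀ i ∈ s, Q i then (1 : ℝ) else 0) =
      (if P then 1 else 0) * ∏ i ∈ s, if Q i then 1 else 0 := by
  by_cases hP : P <;> by_cases hQ : ∀ i ∈ s, Q i <;> simp [hP, hQ, prod_boole]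

section Counting

variable {r h : ℕ} {Ω : Fin r → Type} [∀ i, Fintype (Ω i)] {w : ∀ i, Ω i → ℝ} {K₁ K₂ : Type}
  {G : CGraph Ω K₁ K₂} {ε₁ : ℝ} {S : SComplex r h K₁ K₂}

lemma mem_V1Bad {p : Fin r × Fin h} :
    p ∈ V1Bad Ω w G ε₁ S ↔ p ∈ V1 S ∧ BadVS Ω w G ε₁ S p :=
  mem_filter

lemma countProb_nonneg (hw : ∀ i x, 0 ≤ w i x) : 0 ≤ countProb Ω w G S :=
  EPhi_nonneg hw fun φ => by split_ifs <;> norm_num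

lemma event_pruneBad_of_event {φ : PMap Ω h} (hφ : vEvent G S φ ∧ eEvent G S φ) :
    (vEvent G (pruneBad Ω w G ε₁ S) φ ∧ eEvent G (pruneBad Ω w G ε₁ S) φ) ∧
      ∀ p ∈ V1Bad Ω w G ε₁ S, some (G.vCol p.1 (φ p.1 p.2)) = S.vCol p.1 p.2 := by
  refine ⟨⟨fun p hp => ?_, fun q hq => ?_⟩, fun p hp => hφ.1 p (mem_V1Bad.mp hp).1⟩
  · rw [vCol_pruneBad_of_mem hp]
    exact hφ.1 p (mem_V1_pruneBad.mp hp).1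
  · rw [(colors_pruneBad_of_mem hq).1]
    exact hφ.2 q (mem_V2_pruneBad.mp hq).1

lemma event_of_event_pruneBad (hgood : ∀ q ∈ V2 S, ¬ BadES Ω w G ε₁ S q) {φ : PMap Ω h}
    (hφ : vEvent G (pruneBad Ω w G ε₁ S) φ ∧ eEvent G (pruneBad Ω w G ε₁ S) φ)
    (hbad : ∀ p ∈ V1Bad Ω w G ε₁ S, some (G.vCol p.1 (φ p.1 p.2)) = S.vCol p.1 p.2) :
    vEvent G S φ ∧ eEvent G S φ := by
  refine ⟨fun p hp => ?_, fun q hq => ?_⟩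
  · by_cases hb : BadVS Ω w G ε₁ S p
    · exact hbad p (mem_V1Bad.mpr ⟨hp, hb⟩)
    · have hp' := mem_V1_pruneBad.mpr ⟨hp, hb⟩
      rw [← vCol_pruneBad_of_mem hp']
      exact hφ.1 p hp'
  · have hq' := mem_V2_pruneBad.mpr ⟨hq, hgood q hq⟩
    rw [← (colors_pruneBad_of_mem hq').1]
    exact hφ.2 q hq'

lemma sum_mul_ite_eq_dVS {p : Fin r × Fin h} (hp : p ∈ V1 S) :
    ∑ x : Ω p.1, w p.1 x * (if some (G.vCol p.1 x) = S.vCol p.1 p.2 then 1 else 0) =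
      dVS Ω w G S p := by
  obtain ⟨c, hc⟩ := Option.ne_none_iff_exists'.mp (mem_V1.mp hp)
  simp [dVS, dV, hc]

/-- The bad vertices of `S` are isolated in the pruned complex, hence independent of it. -/
lemma EPhi_event_pruneBad (htot : ∀ i, ∑ x : Ω i, w i x = 1) :
    EPhi Ω w h (fun φ => if (vEvent G (pruneBad Ω w G ε₁ S) φ ∧
        eEvent G (pruneBad Ω w G ε₁ S) φ) ∧
        ∀ p ∈ V1Bad Ω w G ε₁ S, some (G.vCol p.1 (φ p.1 p.2)) = S.vCol p.1 p.2 then 1 else 0) =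
      countProb Ω w G (pruneBad Ω w G ε₁ S) * ∏ p ∈ V1Bad Ω w G ε₁ S, dVS Ω w G S p := by
  simp_rw [ite_and_forall_eq_mul_prod]
  rw [EPhi_mul_prod_apply htot (V1Bad Ω w G ε₁ S)
    (fun p hp φ x => if_congr (event_update_iff (if_pos (mem_V1Bad.mp hp).2) φ x) rfl rfl)
    (fun p x => if some (G.vCol p.1 x) = S.vCol p.1 p.2 then 1 else 0)]
  exact congrArg _ (prod_congr rfl fun p hp => sum_mul_ite_eq_dVS (mem_V1Bad.mp hp).1)

lemma countProb_le_pruneBad (hw : ∀ i x, 0 ≤ w i x) (htot : ∀ i, ∑ x : Ω i, w i x = 1) :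
    countProb Ω w G S ≤
      countProb Ω w G (pruneBad Ω w G ε₁ S) * ∏ p ∈ V1Bad Ω w G ε₁ S, dVS Ω w G S p := by
  rw [← EPhi_event_pruneBad htot]
  refine EPhi_mono hw fun φ => ?_
  by_cases hφ : vEvent G S φ ∧ eEvent G S φ
  · rw [if_pos hφ, if_pos (event_pruneBad_of_event hφ)]
  · rw [if_neg hφ]
    split_ifs <;> norm_num

lemma countProb_eq_pruneBad (htot : ∀ i, ∑ x : Ω i, w i x = 1)
    (hgood : ∀ q ∈ V2 S, ¬ BadES Ω w G ε₁ S q) :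
    countProb Ω w G S =
      countProb Ω w G (pruneBad Ω w G ε₁ S) * ∏ p ∈ V1Bad Ω w G ε₁ S, dVS Ω w G S p := by
  rw [← EPhi_event_pruneBad htot]
  exact congrArg _ (funext fun φ => if_congr ⟨event_pruneBad_of_event,
    fun hφ => event_of_event_pruneBad hgood hφ.1 hφ.2⟩ rfl rfl)

end Counting

section Reduction

variable {r h : ℕ} {Ω : Fin r → Type} [∀ i, Fintype (Ω i)] {w : ∀ i, Ω i → ℝ} {K₁ K₂ : Type}
  {G : CGraph Ω K₁ K₂} {ε₁ : ℝ} {S : SComplex r h K₁ K₂} {δ : Fin r → Fin r → K₂ → K₁ → K₁ → ℝ}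

lemma countEqAt_of_countProb_le (hw : ∀ i x, 0 ≤ w i x) {c : Fin r × Fin r × Fin h × Fin h → ℝ}
    (hc : ∀ q ∈ V2 S, IsPmDot (c q) (dES Ω w G S q) (deltaS δ S q))
    {q₀ : Fin r × Fin r × Fin h × Fin h} (hq₀ : q₀ ∈ V2 S) (hδ : deltaS δ S q₀ = 1)
    (hcq₀ : c q₀ = 1) (hle : countProb Ω w G S ≤ (∏ p ∈ V1 S, dVS Ω w G S p) * ∏ q ∈ V2 S, c q) :
    CountEqAt Ω w G δ S := by
  obtain ⟨t, ht, heq⟩ := exists_mem_Icc_eq_mul (countProb_nonneg hw) hle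
  refine ⟨Function.update c q₀ t, fun q hq => ?_, ?_⟩
  · rcases eq_or_ne q q₀ with rfl | hne
    · rw [Function.update_self, hδ]
      exact isPmDot_one (dES_nonneg_and_le_one hw q) ht
    · rw [Function.update_of_ne hne]
      exact hc q hq
  · rw [heq, prod_update_of_mem hq₀, sdiff_singleton_eq_erase, prod_erase _ hcq₀]
    ring

lemma prod_dVS_mul_prod_ite_badES (c : Fin r × Fin r × Fin h × Fin h → ℝ) :
    (∏ p ∈ V1 S, dVS Ω w G S p) * ∏ q ∈ V2 S, (if BadES Ω w G ε₁ S q then 1 else c q) =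
      (∏ p ∈ V1 (pruneBad Ω w G ε₁ S), dVS Ω w G (pruneBad Ω w G ε₁ S) p) *
        (∏ q ∈ V2 (pruneBad Ω w G ε₁ S), c q) * ∏ p ∈ V1Bad Ω w G ε₁ S, dVS Ω w G S p := by
  have hV1 : ∏ p ∈ V1 (pruneBad Ω w G ε₁ S), dVS Ω w G (pruneBad Ω w G ε₁ S) p =
      ∏ p ∈ (V1 S).filter (¬ BadVS Ω w G ε₁ S ·), dVS Ω w G S p := by
    have hfilter : V1 (pruneBad Ω w G ε₁ S) = (V1 S).filter (¬ BadVS Ω w G ε₁ S ·) := by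
      ext p
      simp only [mem_V1_pruneBad, mem_filter]
    rw [← hfilter]
    exact prod_congr rfl fun p hp => dVS_pruneBad hp
  have hV2 : ∏ q ∈ V2 (pruneBad Ω w G ε₁ S), c q =
      ∏ q ∈ V2 S, (if BadES Ω w G ε₁ S q then 1 else c q) := by
    have hfilter : V2 (pruneBad Ω w G ε₁ S) = (V2 S).filter (¬ BadES Ω w G ε₁ S ·) := by
      ext q
      simp only [mem_V2_pruneBad, mem_filter]
    simp only [hfilter, prod_filter, ite_not]
  rw [hV1, hV2, V1Bad, ← prod_filter_mul_prod_filter_not (V1 S) (BadVS Ω w G ε₁ S)]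
  ring

theorem countEqAt_of_countEqAt_pruneBad (hw : ∀ i x, 0 ≤ w i x)
    (htot : ∀ i, ∑ x : Ω i, w i x = 1) (hbad : ∀ q ∈ V2 S, BadES Ω w G ε₁ S q → deltaS δ S q = 1)
    (hprune : CountEqAt Ω w G δ (pruneBad Ω w G ε₁ S)) : CountEqAt Ω w G δ S := by
  obtain ⟨c', hc', hcount'⟩ := hprune
  set c := fun q => if BadES Ω w G ε₁ S q then 1 else c' q with hc_def
  have hc : ∀ q ∈ V2 S, IsPmDot (c q) (dES Ω w G S q) (deltaS δ S q) := by
    intro q hq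
    by_cases hb : BadES Ω w G ε₁ S q
    · simp only [hc_def, if_pos hb, hbad q hq hb]
      exact isPmDot_one (dES_nonneg_and_le_one hw q) ⟨zero_le_one, le_rfl⟩
    · have hq' := mem_V2_pruneBad.mpr ⟨hq, hb⟩
      simp only [hc_def, if_neg hb, ← dES_pruneBad hq', ← deltaS_pruneBad hq']
      exact hc' q hq'
  have hprod : (∏ p ∈ V1 S, dVS Ω w G S p) * ∏ q ∈ V2 S, c q =
      countProb Ω w G (pruneBad Ω w G ε₁ S) * ∏ p ∈ V1Bad Ω w G ε₁ S, dVS Ω w G S p := by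
    rw [prod_dVS_mul_prod_ite_badES, hcount']
  by_cases hgood : ∀ q ∈ V2 S, ¬ BadES Ω w G ε₁ S q
  · exact ⟨c, hc, (countProb_eq_pruneBad htot hgood).trans hprod.symm⟩
  · push Not at hgood
    obtain ⟨q₀, hq₀, hb₀⟩ := hgood
    exact countEqAt_of_countProb_le hw hc hq₀ (hbad q₀ hq₀ hb₀) (if_pos hb₀)
      (hprod ▸ countProb_le_pruneBad hw htot)

end Reduction

theorem counting_reduction_to_good_general {r : ℕ} (Ω : Fin r → Type)
    [∀ i, Fintype (Ω i)] (w : ∀ i, Ω i → ℝ)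
    (hw : ∀ i x, 0 ≤ w i x) (htot : ∀ i, ∑ x : Ω i, w i x = 1)
    {K₁ K₂ : Type} (G : CGraph Ω K₁ K₂) (h : ℕ)
    (b₂ : ℕ) (ε : ℝ)
    (δ : Fin r → Fin r → K₂ → K₁ → K₁ → ℝ)
    (hδ0 : ∀ i j c₂ ci cj, 0 ≤ δ i j c₂ ci cj)
    (hδbad : ∀ (i j : Fin r), i ≠ j → ∀ (x : Ω i) (y : Ω j),
      BadE Ω w G (eps1 r b₂ ε) i j (G.eCol i j x y) (G.vCol i x) (G.vCol j y) →
        δ i j (G.eCol i j x y) (G.vCol i x) (G.vCol j y) = 1)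
    (hcount : ∀ S : SComplex r h K₁ K₂, S.MemS G →
      (∀ p ∈ V1 S, ¬ BadVS Ω w G (eps1 r b₂ ε) S p) →
      (∀ q ∈ V2 S, ¬ BadES Ω w G (eps1 r b₂ ε) S q) →
      CountEqAt Ω w G δ S) :
    IsErrorFun Ω w G h δ := by
  intro S hS
  by_cases hreal : ∀ q ∈ V2 S, EdgeRealized G S q
  · exact countEqAt_of_countEqAt_pruneBad hw htot
      (fun q hq hbad => deltaS_eq_one_of_badES hδbad hq hbad (hreal q hq))
      (hcount _ (memS_pruneBad hS) pruneBad_not_badVS pruneBad_not_badES)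
  · push Not at hreal
    obtain ⟨q, hq, hq'⟩ := hreal
    exact countEqAt_of_not_edgeRealized hw hδ0 hq hq'

/-- reduction to complexes without bad edges. Suppose
`δ ≥ 0` equals `1` on every bad total color of `TC₂(G*)` (vertex total colors
carry error `0`, as in the counting equation). If the counting equation holds
for every `S ∈ S_{h,G*}` none of whose visible edges has a bad total color, then
it holds for every `S ∈ S_{h,G*}`. -/
theorem counting_reduction_to_good {r : ℕ} (Ω : Fin r → Type)
    [∀ i, Fintype (Ω i)] [∀ i, Nonempty (Ω i)] (w : ∀ i, Ω i → ℝ)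
    (hw : ∀ i x, 0 ≤ w i x) (htot : ∀ i, ∑ x : Ω i, w i x = 1)
    {K₁ K₂ : Type} (G : CGraph Ω K₁ K₂) (h : ℕ) (hh : 1 ≤ h)
    (b₂ : ℕ) (hb₂ : 1 ≤ b₂) (ε : ℝ) (hε : 0 < ε)
    (δ : Fin r → Fin r → K₂ → K₁ → K₁ → ℝ)
    (hδ0 : ∀ i j c₂ ci cj, 0 ≤ δ i j c₂ ci cj)
    (hδbad : ∀ (i j : Fin r), i ≠ j → ∀ (x : Ω i) (y : Ω j),
      BadE Ω w G (eps1 r b₂ ε) i j (G.eCol i j x y) (G.vCol i x) (G.vCol j y) →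
        δ i j (G.eCol i j x y) (G.vCol i x) (G.vCol j y) = 1)
    (hcount : ∀ S : SComplex r h K₁ K₂, S.MemS G →
      (∀ p ∈ V1 S, ¬ BadVS Ω w G (eps1 r b₂ ε) S p) →
      (∀ q ∈ V2 S, ¬ BadES Ω w G (eps1 r b₂ ε) S q) →
      CountEqAt Ω w G δ S) :
    IsErrorFun Ω w G h δ :=
  counting_reduction_to_good_general Ω w hw htot G h b₂ ε δ hδ0 hδbad hcount
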